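/- Let ι be a finite type, g₁, g₂ : (ι → ℝ) → ℝ affine functions, and k₁, k₂ ∈ ℝ. Let P := {x : ι → ℝ | (∀ i, 0 ≤ x i ≤ 1) ∧ g₁(x) ≤ k₁ ∧ g₂(x) ≤ k₂}. If x* is an extreme point of P, then the number of indices i with 0 < x* i < 1 is at most the number of j ∈ {1,2} with g_j(x*) = k_j; in particular x* has at most two fractional coordinates. -/

import Mathlib

/-!
If an extreme point `x` had more fractional coordinates than tight constraints, the homogeneous
system "`v i = 0` off the fractional coordinates, `(g j).linear v = 0` for the tight `j`" would
have fewer equations than unknowns, hence a solution `v ≠ 0`. Moving from `x` to `x ± t • v`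
changes neither the integral coordinates nor the values of the tight constraints, and for small
`t` keeps the fractional coordinates in `(0, 1)` and the slack constraints slack; so `x` is the
midpoint of two distinct points of the polytope.
-/

open Filter Topology Module

theorem eq_zero_of_add_mem_of_sub_mem_extremePoints {𝕜 E : Type*} [Field 𝕜] [LinearOrder 𝕜]
    [IsStrictOrderedRing 𝕜] [AddCommGroup E] [Module 𝕜 E] {A : Set E} {x v : E}
    (hx : x ∈ A.extremePoints 𝕜) (hadd : x + v ∈ A) (hsub : x - v ∈ A) : v = 0 := by
  have hmid : x ∈ openSegment 𝕜 (x + v) (x - v) :=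
    ⟨1 / 2, 1 / 2, by norm_num, by norm_num, by norm_num, by module⟩
  simpa using hx.2 hadd hsub hmid

theorem eq_zero_of_eventually_add_smul_mem_extremePoints {E : Type*} [AddCommGroup E]
    [Module ℝ E] {A : Set E} {x v : E} (hx : x ∈ A.extremePoints ℝ)
    (hline : ∀ᶠ t : ℝ in 𝓝 0, x + t • v ∈ A) : v = 0 := by
  obtain ⟨ε, hε, hball⟩ := Metric.eventually_nhds_iff.mp hline
  have hadd : x + (ε / 2) • v ∈ A := hball (by simp [abs_of_pos hε]; linarith)
  have hsub : x - (ε / 2) • v ∈ A := by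
    simpa [sub_eq_add_neg] using hball (y := -(ε / 2)) (by simp [abs_of_pos hε]; linarith)
  have := eq_zero_of_add_mem_of_sub_mem_extremePoints hx hadd hsub
  exact (smul_eq_zero.mp this).resolve_left (by positivity)

theorem exists_ne_zero_forall_notMem_eq_zero_of_card_lt {K ι J : Type*} [Field K] [Finite ι]
    [Finite J] (f : J → (ι → K) →ₗ[K] K) {s : Set ι} (hcard : Nat.card J < s.ncard) :
    ∃ v ≠ 0, (∀ i ∉ s, v i = 0) ∧ ∀ j, f j v = 0 := by
  have := Fintype.ofFinite ι
  have := Fintype.ofFinite J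
  have := Fintype.ofFinite ↥sᶜ
  let L := (LinearMap.pi f).prod (LinearMap.pi fun i : ↥sᶜ ↦ LinearMap.proj (R := K) i.1)
  have hdim : finrank K ((J → K) × (↥sᶜ → K)) < finrank K (ι → K) := by
    rw [finrank_prod, finrank_fintype_fun_eq_card, finrank_fintype_fun_eq_card,
      finrank_fintype_fun_eq_card, Fintype.card_eq_nat_card, Fintype.card_eq_nat_card,
      Fintype.card_eq_nat_card, Nat.card_coe_set_eq, ← s.ncard_add_ncard_compl]
    omega
  obtain ⟨v, hv, hv0⟩ :=
    Submodule.exists_mem_ne_zero_of_ne_bot (LinearMap.ker_ne_bot_of_finrank_lt (f := L) hdim)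
  obtain ⟨hf, hs⟩ := Prod.ext_iff.mp (LinearMap.mem_ker.mp hv)
  exact ⟨v, hv0, fun i hi ↦ congrFun hs ⟨i, hi⟩, congrFun hf⟩

def cutUnitCube {ι J : Type*} (g : J → (ι → ℝ) →ᵃ[ℝ] ℝ) (k : J → ℝ) : Set (ι → ℝ) :=
  {y | (∀ i, 0 ≤ y i ∧ y i ≤ 1) ∧ ∀ j, g j y ≤ k j}

section CutUnitCube

variable {ι J : Type*} [Fintype ι] [Finite J] (g : J → (ι → ℝ) →ᵃ[ℝ] ℝ) (k : J → ℝ)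

theorem eventually_add_smul_mem_cutUnitCube {x v : ι → ℝ} (hx : x ∈ cutUnitCube g k)
    (hv : ∀ i, ¬(0 < x i ∧ x i < 1) → v i = 0) (hg : ∀ j, g j x = k j → (g j).linear v = 0) :
    ∀ᶠ t : ℝ in 𝓝 0, x + t • v ∈ cutUnitCube g k := by
  have hstrict : ∀ᶠ y in 𝓝 x,
      (∀ i, 0 < x i ∧ x i < 1 → 0 < y i ∧ y i < 1) ∧ ∀ j, g j x < k j → g j y < k j := by
    refine (eventually_all.2 fun i ↦ ?_).and (eventually_all.2 fun j ↦ ?_)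
    · by_cases h : 0 < x i ∧ x i < 1
      · have hi := (continuous_apply i).continuousAt (x := x)
        filter_upwards [continuousAt_const.eventually_lt hi h.1,
          hi.eventually_lt continuousAt_const h.2] with y h₀ h₁ using fun _ ↦ ⟨h₀, h₁⟩
      · exact .of_forall fun _ h' ↦ absurd h' h
    · by_cases h : g j x < k j
      · have hgj := (g j).continuous_of_finiteDimensional.continuousAt (x := x)
        filter_upwards [hgj.eventually_lt continuousAt_const h] with y hy using fun _ ↦ hy
      · exact .of_forall fun _ h' ↦ absurd h' h
  have hline : Tendsto (fun t : ℝ ↦ x + t • v) (𝓝 0) (𝓝 x) :=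
    (continuous_const.add (continuous_id.smul continuous_const)).tendsto' 0 x (by simp)
  filter_upwards [hline.eventually hstrict] with t ⟨hbox, hcon⟩
  refine ⟨fun i ↦ ?_, fun j ↦ ?_⟩
  · by_cases h : 0 < x i ∧ x i < 1
    · exact (hbox i h).imp le_of_lt le_of_lt
    · simpa [hv i h] using hx.1 i
  · rcases (hx.2 j).eq_or_lt with htight | hslack
    · rw [add_comm, ← vadd_eq_add, AffineMap.map_vadd, map_smul, hg j htight, smul_zero,
        zero_vadd, htight]
    · exact (hcon j hslack).le

theorem ncard_fractional_le_ncard_tight {x : ι → ℝ}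
    (hx : x ∈ (cutUnitCube g k).extremePoints ℝ) :
    {i | 0 < x i ∧ x i < 1}.ncard ≤ {j | g j x = k j}.ncard := by
  by_contra! hlt
  obtain ⟨v, hv0, hvF, hvT⟩ := exists_ne_zero_forall_notMem_eq_zero_of_card_lt
    (fun j : {j | g j x = k j} ↦ (g j).linear) hlt
  exact hv0 <| eq_zero_of_eventually_add_smul_mem_extremePoints hx <|
    eventually_add_smul_mem_cutUnitCube g k hx.1 hvF fun j hj ↦ hvT ⟨j, hj⟩

end CutUnitCube

theorem stmt_7 {ι : Type*} [Fintype ι]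
    (g : Fin 2 → ((ι → ℝ) →ᵃ[ℝ] ℝ)) (k : Fin 2 → ℝ)
    (x : ι → ℝ)
    (hx : x ∈ Set.extremePoints ℝ
      {y : ι → ℝ | (∀ i, 0 ≤ y i ∧ y i ≤ 1) ∧ ∀ j, g j y ≤ k j}) :
    {i | 0 < x i ∧ x i < 1}.ncard ≤ {j : Fin 2 | g j x = k j}.ncard ∧
    {i | 0 < x i ∧ x i < 1}.ncard ≤ 2 := by
  have hfrac := ncard_fractional_le_ncard_tight g k hx
  refine ⟨hfrac, hfrac.trans ?_⟩
  simpa using Set.ncard_le_card {j | g j x = k j}
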